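/- arXiv:1807.00400 — 2 statements merged into one kernel-verified Lean document; each statement's English description precedes it below -/
import Mathlib

section
/- Let R = R(a_1,…,a_l) and R' = R(b_1,…,b_m) be top-l and top-m partial rankings in S_n. Let b_{i_1},…,b_{i_q} be the elements of {b_1,…,b_m} ∖ {a_1,…,a_l}, listed with i_1 < i_2 < ⋯ < i_q, and let R'' = R(a_1,…,a_l, b_{i_1},…,b_{i_q}) ⊆ R be the corresponding top-(l+q) partial ranking. If τ is uniformly distributed on R', then Π_R(τ) is uniformly distributed on R''; that is, the pushforward of the uniform probability measure on R' under the map Π_R equals the uniform probability measure on R''. -/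
/-- The Kendall (tau) distance between two permutations of `Fin n`:
the number of pairs `(x, y)` with `x < y` on which `σ⁻¹` and `τ⁻¹`
disagree in relative order. -/
def kendallDist {n : ℕ} (σ τ : Equiv.Perm (Fin n)) : ℕ :=
  (Finset.univ.filter (fun p : Fin n × Fin n =>
    p.1 < p.2 ∧ ¬((σ⁻¹ p.1 < σ⁻¹ p.2) ↔ (τ⁻¹ p.1 < τ⁻¹ p.2)))).card

/-- The top-`k` partial ranking determined by the items `a 0, …, a (k-1)`:
the set of full rankings (permutations) `σ` with `σ i = a i` for the first
`k` positions. -/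
def topkFinset {n k : ℕ} (hk : k ≤ n) (a : Fin k → Fin n) :
    Finset (Equiv.Perm (Fin n)) :=
  Finset.univ.filter fun σ => ∀ i : Fin k, σ (Fin.castLE hk i) = a i

/-- The permutation of `Fin n` fixing the first `k` positions and reversing
the order of the remaining `n - k` positions. -/
def revAfter (n k : ℕ) : Equiv.Perm (Fin n) :=
  Function.Involutive.toPerm
    (fun p => if _h : (p : ℕ) < k then p
      else ⟨n + k - 1 - (p : ℕ), by have := p.isLt; omega⟩)
    (by
      intro p
      have hp := p.isLt
      by_cases h : (p : ℕ) < k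
      · simp [h]
      · have h2 : ¬ (n + k - 1 - (p : ℕ) < k) := by omega
        simp only [dif_neg h, dif_neg h2]
        ext
        simp
        omega)

/-- The antithetic permutation of `σ` relative to a top-`k` partial ranking:
the first `k` positions are unchanged and the remaining positions are
reversed, i.e. `A σ (k+j) = σ (n+1-j)` (in 1-indexed notation). -/
def antithetic (n k : ℕ) (σ : Equiv.Perm (Fin n)) : Equiv.Perm (Fin n) :=
  σ * revAfter n k

/-!
For `τ ∈ R'`, the Kendall projection of `τ` onto `R` is the unique `ρ ∈ R` that orders the free
items (those outside `{a_1,…,a_l}`) exactly as `τ` does: every other member of `R` misorders all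
the pairs `ρ` misorders (these meet some `a_i`, where all of `R` agrees) and at least one pair of
free items besides. Since `τ` puts `b_{i_1},…,b_{i_q}` in this order before every other free item,
this `ρ` lies in `R''`.

Left multiplication by a permutation `g` fixing every `a_i` and every `b_j` preserves `R'` and
commutes with the projection. For `ρ₁, ρ₂ ∈ R''` the permutation `ρ₂ ρ₁⁻¹` is of this kind and
maps the fibre over `ρ₁` into the fibre over `ρ₂`, so all fibres over `R''` have the same size.
-/

open Finset Function Equiv

namespace Equiv.Perm

variable {α : Type*} [LinearOrder α]

theorem eq_of_inv_lt_inv_iff [WellFoundedLT α] {ρ ρ' : Perm α}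
    (h : ∀ x y, ρ⁻¹ x < ρ⁻¹ y ↔ ρ'⁻¹ x < ρ'⁻¹ y) : ρ = ρ' := by
  have hmono : StrictMono (ρ'⁻¹ * ρ) := fun p q hpq => by
    simpa using (h (ρ p) (ρ q)).mp (by simpa using hpq)
  have hid : hmono.orderIsoOfSurjective _ (ρ'⁻¹ * ρ).surjective = OrderIso.refl α :=
    Subsingleton.elim _ _
  exact (inv_mul_eq_one.mp (Perm.ext fun p => DFunLike.congr_fun hid p)).symm

def SameOrderOn (S : Set α) (ρ τ : Perm α) : Prop :=
  ∀ x ∈ S, ∀ y ∈ S, (ρ⁻¹ x < ρ⁻¹ y ↔ τ⁻¹ x < τ⁻¹ y)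

theorem sameOrderOn_of_lt {S : Set α} {ρ τ : Perm α}
    (h : ∀ x ∈ S, ∀ y ∈ S, x < y → (ρ⁻¹ x < ρ⁻¹ y ↔ τ⁻¹ x < τ⁻¹ y)) :
    SameOrderOn S ρ τ := by
  intro x hx y hy
  rcases lt_trichotomy x y with hxy | rfl | hxy
  · exact h x hx y hy hxy
  · simp
  · have hρ := ρ⁻¹.injective.ne hxy.ne
    have hτ := τ⁻¹.injective.ne hxy.ne
    rw [← not_iff_not, not_lt, not_lt, hρ.le_iff_lt, hτ.le_iff_lt]
    exact h y hy x hx hxy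

theorem SameOrderOn.mul_left {S : Set α} {ρ τ : Perm α} (h : SameOrderOn S ρ τ) {g : Perm α}
    (hg : ∀ x ∈ S, g⁻¹ x ∈ S) : SameOrderOn S (g * ρ) (g * τ) := fun x hx y hy => by
  simpa only [mul_inv_rev, Perm.mul_apply] using h _ (hg x hx) _ (hg y hy)

end Equiv.Perm

theorem PMF.map_uniformOfFinset_eq_of_card_fiber_eq {α β : Type*} [DecidableEq β]
    {s : Finset α} {t : Finset β} (hs : s.Nonempty) (ht : t.Nonempty) {f : α → β}
    (hmaps : Set.MapsTo f s t)
    (hfiber : ∀ y₁ ∈ t, ∀ y₂ ∈ t, #{x ∈ s | f x = y₁} = #{x ∈ s | f x = y₂}) :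
    (uniformOfFinset s hs).map f = uniformOfFinset t ht := by
  ext y
  rw [← toOuterMeasure_apply_singleton, toOuterMeasure_map_apply,
    toOuterMeasure_uniformOfFinset_apply, uniformOfFinset_apply]
  simp only [Set.mem_preimage, Set.mem_singleton_iff]
  split_ifs with hy
  · have hcard : #s = #t * #{x ∈ s | f x = y} := by
      rw [card_eq_sum_card_fiberwise hmaps, sum_congr rfl fun y' hy' => hfiber y' hy' y hy,
        sum_const, smul_eq_mul]
    have hpos : #{x ∈ s | f x = y} ≠ 0 := by
      intro h
      rw [h, mul_zero, card_eq_zero] at hcard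
      exact hs.ne_empty hcard
    rw [hcard, Nat.cast_mul, ENNReal.div_eq_inv_mul,
      ENNReal.mul_inv (.inr (ENNReal.natCast_ne_top _)) (.inl (ENNReal.natCast_ne_top _)),
      mul_assoc, ENNReal.inv_mul_cancel (by exact_mod_cast hpos) (ENNReal.natCast_ne_top _),
      mul_one]
  · rw [filter_eq_empty_iff.mpr fun x hx (hxy : f x = y) => hy (hxy ▸ hmaps hx)]
    simp

theorem Fin.range_append {α : Type*} {k m : ℕ} (u : Fin k → α) (v : Fin m → α) :
    Set.range (Fin.append u v) = Set.range u ∪ Set.range v := by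
  ext x
  constructor
  · rintro ⟨i, rfl⟩
    induction i using Fin.addCases <;> simp
  · rintro (⟨i, rfl⟩ | ⟨i, rfl⟩)
    · exact ⟨Fin.castAdd m i, Fin.append_left u v i⟩
    · exact ⟨Fin.natAdd k i, Fin.append_right u v i⟩

open Equiv.Perm

section TopK

variable {n k : ℕ} {hk : k ≤ n} {c : Fin k → Fin n} {σ ρ ρ' τ : Perm (Fin n)}

theorem mem_topkFinset : σ ∈ topkFinset hk c ↔ ∀ i, σ (Fin.castLE hk i) = c i := by
  simp [topkFinset]

theorem injective_of_mem_topkFinset (hσ : σ ∈ topkFinset hk c) : Injective c := by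
  intro i j hij
  rw [← mem_topkFinset.mp hσ i, ← mem_topkFinset.mp hσ j] at hij
  exact Fin.castLE_injective hk (σ.injective hij)

theorem inv_apply_of_mem_topkFinset (hσ : σ ∈ topkFinset hk c) (i : Fin k) :
    σ⁻¹ (c i) = Fin.castLE hk i :=
  Perm.inv_eq_iff_eq.mpr (mem_topkFinset.mp hσ i).symm

theorem inv_apply_lt_iff_of_mem_topkFinset (hσ : σ ∈ topkFinset hk c) (i j : Fin k) :
    σ⁻¹ (c i) < σ⁻¹ (c j) ↔ i < j := by
  rw [inv_apply_of_mem_topkFinset hσ, inv_apply_of_mem_topkFinset hσ, Fin.castLE_lt_castLE_iff]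

theorem inv_apply_lt_of_mem_topkFinset (hσ : σ ∈ topkFinset hk c) (i : Fin k) {x : Fin n}
    (hx : x ∉ Set.range c) : σ⁻¹ (c i) < σ⁻¹ x := by
  rw [inv_apply_of_mem_topkFinset hσ, Fin.lt_def, Fin.val_castLE]
  by_contra! hle
  exact hx ⟨⟨_, i.isLt.trans_le' hle⟩, by
    rw [← mem_topkFinset.mp hσ]; exact σ.apply_symm_apply x⟩

theorem inv_lt_inv_iff_of_mem_topkFinset (hρ : ρ ∈ topkFinset hk c) (hρ' : ρ' ∈ topkFinset hk c)
    {x y : Fin n} (h : x ∈ Set.range c ∨ y ∈ Set.range c) :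
    ρ⁻¹ x < ρ⁻¹ y ↔ ρ'⁻¹ x < ρ'⁻¹ y := by
  rcases h with ⟨i, rfl⟩ | ⟨j, rfl⟩
  · by_cases hy : y ∈ Set.range c
    · obtain ⟨j, rfl⟩ := hy
      rw [inv_apply_lt_iff_of_mem_topkFinset hρ, inv_apply_lt_iff_of_mem_topkFinset hρ']
    · exact iff_of_true (inv_apply_lt_of_mem_topkFinset hρ i hy)
        (inv_apply_lt_of_mem_topkFinset hρ' i hy)
  · by_cases hx : x ∈ Set.range c
    · obtain ⟨i, rfl⟩ := hx
      rw [inv_apply_lt_iff_of_mem_topkFinset hρ, inv_apply_lt_iff_of_mem_topkFinset hρ']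
    · exact iff_of_false (inv_apply_lt_of_mem_topkFinset hρ j hx).asymm
        (inv_apply_lt_of_mem_topkFinset hρ' j hx).asymm

theorem eq_of_sameOrderOn_compl (hρ : ρ ∈ topkFinset hk c) (hρ' : ρ' ∈ topkFinset hk c)
    (h : SameOrderOn (Set.range c)ᶜ ρ τ) (h' : SameOrderOn (Set.range c)ᶜ ρ' τ) : ρ = ρ' := by
  refine eq_of_inv_lt_inv_iff fun x y => ?_
  by_cases hxy : x ∈ Set.range c ∨ y ∈ Set.range c
  · exact inv_lt_inv_iff_of_mem_topkFinset hρ hρ' hxy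
  · push Not at hxy
    rw [h x hxy.1 y hxy.2, h' x hxy.1 y hxy.2]

theorem mul_mem_topkFinset {g : Perm (Fin n)} (hg : ∀ i, g (c i) = c i)
    (hσ : σ ∈ topkFinset hk c) : g * σ ∈ topkFinset hk c :=
  mem_topkFinset.mpr fun i => by rw [Perm.mul_apply, mem_topkFinset.mp hσ, hg]

theorem mul_inv_apply_of_mem_topkFinset (hρ : ρ ∈ topkFinset hk c) (hρ' : ρ' ∈ topkFinset hk c)
    (i : Fin k) : (ρ' * ρ⁻¹) (c i) = c i := by
  rw [Perm.mul_apply, inv_apply_of_mem_topkFinset hρ, mem_topkFinset.mp hρ']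

theorem exists_mem_topkFinset_sameOrderOn (hc : Injective c) (τ : Perm (Fin n)) :
    ∃ ρ ∈ topkFinset hk c, SameOrderOn (Set.range c)ᶜ ρ τ := by
  classical
  set T : Finset (Fin n) := (univ.image fun i => τ⁻¹ (c i))ᶜ
  have hT : #T = n - k := by
    rw [card_compl, card_image_of_injective _ fun i j h => hc (τ⁻¹.injective h), card_univ,
      Fintype.card_fin, Fintype.card_fin]
  -- the positions at which `τ` holds an item outside `range c`, in increasing order
  set pos := T.orderEmbOfFin hT
  have hpos : ∀ j, τ (pos j) ∉ Set.range c := by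
    rintro j ⟨i, hi⟩
    have := T.orderEmbOfFin_mem hT j
    simp only [T, mem_compl, mem_image, mem_univ, true_and, not_exists] at this
    exact this i (by rw [hi]; exact τ.symm_apply_apply _)
  set f : Fin n → Fin n := fun p =>
    if h : (p : ℕ) < k then c ⟨p, h⟩ else τ (pos ⟨p - k, by omega⟩) with hf
  have hfinj : Injective f := by
    intro p p' hpp'
    by_cases hp : (p : ℕ) < k <;> by_cases hp' : (p' : ℕ) < k <;>
      simp only [hf, dif_pos, dif_neg, hp, hp', not_false_eq_true] at hpp'
    · exact Fin.ext (Fin.mk.inj_iff.mp (hc hpp'))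
    · exact absurd ⟨_, hpp'⟩ (hpos _)
    · exact absurd ⟨_, hpp'.symm⟩ (hpos _)
    · have := Fin.mk.inj_iff.mp (pos.injective (τ.injective hpp'))
      omega
  set ρ := Equiv.ofBijective f hfinj.bijective_of_finite
  refine ⟨ρ, mem_topkFinset.mpr fun i => dif_pos i.isLt, ?_⟩
  have hτρ : ∀ p : Fin n, ρ p ∉ Set.range c →
      ∃ hp : ¬(p : ℕ) < k, τ⁻¹ (ρ p) = pos ⟨p - k, by omega⟩ := fun p hρp => by
    have hp : ¬(p : ℕ) < k := fun hp => hρp ⟨⟨p, hp⟩, (dif_pos hp : f p = _).symm⟩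
    exact ⟨hp, Perm.inv_eq_iff_eq.mpr (dif_neg hp : f p = _)⟩
  intro x hx y hy
  obtain ⟨p, rfl⟩ := ρ.surjective x
  obtain ⟨p', rfl⟩ := ρ.surjective y
  obtain ⟨hp, hτp⟩ := hτρ p hx
  obtain ⟨hp', hτp'⟩ := hτρ p' hy
  rw [hτp, hτp', pos.lt_iff_lt]
  simp only [Perm.coe_inv, Equiv.symm_apply_apply, Fin.lt_def]
  omega

end TopK

theorem kendallDist_lt_of_sameOrderOn {n k : ℕ} {hk : k ≤ n} {c : Fin k → Fin n}
    {ρ ρ' τ : Perm (Fin n)} (hρ : ρ ∈ topkFinset hk c) (hρ' : ρ' ∈ topkFinset hk c)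
    (h : SameOrderOn (Set.range c)ᶜ ρ τ) (hne : ρ' ≠ ρ) :
    kendallDist ρ τ < kendallDist ρ' τ := by
  refine card_lt_card (ssubset_of_subset_not_superset ?_ ?_)
  · -- `ρ` can only misorder pairs meeting `range c`, and there `ρ'` orders like `ρ`
    intro p hp
    simp only [mem_filter, mem_univ, true_and] at hp ⊢
    refine ⟨hp.1, fun hiff => hp.2 ?_⟩
    by_cases hmem : p.1 ∈ Set.range c ∨ p.2 ∈ Set.range c
    · exact (inv_lt_inv_iff_of_mem_topkFinset hρ hρ' hmem).trans hiff
    · push Not at hmem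
      exact h _ hmem.1 _ hmem.2
  · intro hsub
    refine hne (eq_of_sameOrderOn_compl hρ' hρ (sameOrderOn_of_lt fun x hx y hy hxy => ?_) h)
    by_contra hdis
    have := @hsub (x, y) (mem_filter.mpr ⟨mem_univ _, hxy, hdis⟩)
    exact (mem_filter.mp this).2.2 (h x hx y hy)

def IsKendallProjection {n : ℕ} (R : Finset (Perm (Fin n)))
    (pr : Perm (Fin n) → Perm (Fin n)) : Prop :=
  ∀ τ, pr τ ∈ R ∧ ∀ ρ ∈ R, kendallDist (pr τ) τ ≤ kendallDist ρ τ

namespace IsKendallProjection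

variable {n l : ℕ} {hl : l ≤ n} {a : Fin l → Fin n} {pr : Perm (Fin n) → Perm (Fin n)}

theorem eq_of_sameOrderOn (hpr : IsKendallProjection (topkFinset hl a) pr)
    {ρ τ : Perm (Fin n)} (hρ : ρ ∈ topkFinset hl a) (h : SameOrderOn (Set.range a)ᶜ ρ τ) :
    pr τ = ρ := by
  by_contra hne
  exact (hpr τ).2 ρ hρ |>.not_gt (kendallDist_lt_of_sameOrderOn hρ (hpr τ).1 h hne)

theorem map_mul (hpr : IsKendallProjection (topkFinset hl a) pr)
    {g τ : Perm (Fin n)} (hg : ∀ i, g (a i) = a i) (h : SameOrderOn (Set.range a)ᶜ (pr τ) τ) :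
    pr (g * τ) = g * pr τ := by
  refine hpr.eq_of_sameOrderOn (mul_mem_topkFinset hg (hpr τ).1) (h.mul_left ?_)
  rintro x hx ⟨i, hi⟩
  exact hx ⟨i, by rw [← hg i, hi]; exact g.apply_symm_apply x⟩

end IsKendallProjection

section Refinement

variable {n l m q : ℕ} {hl : l ≤ n} {hm : m ≤ n} {hlq : l + q ≤ n}
  {a : Fin l → Fin n} {b : Fin m → Fin n} {e : Fin q → Fin m}

theorem topkFinset_append_subset {d : Fin q → Fin n} :
    topkFinset hlq (Fin.append a d) ⊆ topkFinset hl a := fun σ hσ =>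
  mem_topkFinset.mpr fun i => by
    have := mem_topkFinset.mp hσ (Fin.castAdd q i)
    rwa [Fin.append_left] at this

theorem sameOrderOn_compl_of_mem_topkFinset_append (he : StrictMono e)
    (hrange : Set.range b \ Set.range a ⊆ Set.range (b ∘ e)) {ρ τ : Perm (Fin n)}
    (hρ : ρ ∈ topkFinset hlq (Fin.append a (b ∘ e))) (hτ : τ ∈ topkFinset hm b)
    (h : SameOrderOn (Set.range (Fin.append a (b ∘ e)))ᶜ ρ τ) :
    SameOrderOn (Set.range a)ᶜ ρ τ := by
  have happ : ∀ j, Fin.append a (b ∘ e) (Fin.natAdd l j) = b (e j) := Fin.append_right _ _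
  have hfree : ∀ x ∉ Set.range a, x ∉ Set.range (b ∘ e) →
      x ∉ Set.range (Fin.append a (b ∘ e)) ∧ x ∉ Set.range b := fun x hxa hxe =>
    ⟨by rw [Fin.range_append]; exact fun hx => hx.elim hxa hxe,
      fun hxb => hxe (hrange ⟨hxb, hxa⟩)⟩
  have hρlt : ∀ j {y}, y ∉ Set.range (Fin.append a (b ∘ e)) → ρ⁻¹ (b (e j)) < ρ⁻¹ y :=
    fun j _ hy => happ j ▸ inv_apply_lt_of_mem_topkFinset hρ _ hy
  have hτlt : ∀ j {y}, y ∉ Set.range b → τ⁻¹ (b (e j)) < τ⁻¹ y :=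
    fun j _ hy => inv_apply_lt_of_mem_topkFinset hτ _ hy
  intro x hx y hy
  by_cases hxe : x ∈ Set.range (b ∘ e) <;> by_cases hye : y ∈ Set.range (b ∘ e)
  · obtain ⟨i, rfl⟩ := hxe
    obtain ⟨j, rfl⟩ := hye
    rw [comp_apply, comp_apply, inv_apply_lt_iff_of_mem_topkFinset hτ, he.lt_iff_lt, ← happ,
      ← happ, inv_apply_lt_iff_of_mem_topkFinset hρ, Fin.natAdd_lt_natAdd_iff]
  · obtain ⟨i, rfl⟩ := hxe
    obtain ⟨hyc, hyb⟩ := hfree y hy hye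
    exact iff_of_true (hρlt i hyc) (hτlt i hyb)
  · obtain ⟨j, rfl⟩ := hye
    obtain ⟨hxc, hxb⟩ := hfree x hx hxe
    exact iff_of_false (hρlt j hxc).asymm (hτlt j hxb).asymm
  · exact h x (hfree x hx hxe).1 y (hfree y hy hye).1

end Refinement

namespace IsKendallProjection

variable {n l m q : ℕ} {hl : l ≤ n} {hm : m ≤ n} {hlq : l + q ≤ n}
  {a : Fin l → Fin n} {b : Fin m → Fin n} {e : Fin q → Fin m}
  {pr : Perm (Fin n) → Perm (Fin n)}

theorem apply_mem_topkFinset_append (hpr : IsKendallProjection (topkFinset hl a) pr)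
    (he : StrictMono e) (hrange : Set.range b \ Set.range a ⊆ Set.range (b ∘ e))
    (hR'' : (topkFinset hlq (Fin.append a (b ∘ e))).Nonempty) {τ : Perm (Fin n)}
    (hτ : τ ∈ topkFinset hm b) :
    pr τ ∈ topkFinset hlq (Fin.append a (b ∘ e)) ∧ SameOrderOn (Set.range a)ᶜ (pr τ) τ := by
  obtain ⟨σ, hσ⟩ := hR''
  obtain ⟨ρ, hρ, hagree⟩ := exists_mem_topkFinset_sameOrderOn (injective_of_mem_topkFinset hσ) τ
  have hagree' := sameOrderOn_compl_of_mem_topkFinset_append he hrange hρ hτ hagree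
  rw [hpr.eq_of_sameOrderOn (topkFinset_append_subset hρ) hagree']
  exact ⟨hρ, hagree'⟩

theorem card_fiber_le (hpr : IsKendallProjection (topkFinset hl a) pr)
    (he : StrictMono e) (hrange : Set.range b \ Set.range a ⊆ Set.range (b ∘ e))
    (hR'' : (topkFinset hlq (Fin.append a (b ∘ e))).Nonempty) {ρ₁ ρ₂ : Perm (Fin n)}
    (h₁ : ρ₁ ∈ topkFinset hlq (Fin.append a (b ∘ e)))
    (h₂ : ρ₂ ∈ topkFinset hlq (Fin.append a (b ∘ e))) :
    #{τ ∈ topkFinset hm b | pr τ = ρ₁} ≤ #{τ ∈ topkFinset hm b | pr τ = ρ₂} := by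
  have hg := mul_inv_apply_of_mem_topkFinset h₁ h₂
  have hga : ∀ i, (ρ₂ * ρ₁⁻¹) (a i) = a i := fun i => by
    have := hg (Fin.castAdd q i)
    rwa [Fin.append_left] at this
  have hgb : ∀ i, (ρ₂ * ρ₁⁻¹) (b i) = b i := fun i => by
    by_cases hbi : b i ∈ Set.range a
    · obtain ⟨j, hj⟩ := hbi
      rw [← hj, hga]
    · obtain ⟨j, hj⟩ := hrange ⟨⟨i, rfl⟩, hbi⟩
      have := hg (Fin.natAdd l j)
      rwa [Fin.append_right, hj] at this
  refine card_le_card_of_injOn (ρ₂ * ρ₁⁻¹ * ·) (fun τ hτ => ?_) fun τ _ τ' _ => mul_left_cancel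
  obtain ⟨hτR', rfl⟩ := mem_filter.mp hτ
  refine mem_filter.mpr ⟨mul_mem_topkFinset hgb hτR', ?_⟩
  rw [hpr.map_mul hga (hpr.apply_mem_topkFinset_append he hrange hR'' hτR').2,
    inv_mul_cancel_right]

end IsKendallProjection

theorem proj_pushforward_uniform_general {n l m q : ℕ} (hl : l ≤ n) (hm : m ≤ n)
    (hlq : l + q ≤ n)
    (a : Fin l → Fin n)
    (b : Fin m → Fin n)
    (e : Fin q → Fin m) (he : StrictMono e)
    (hrange : Set.range (b ∘ e) = Set.range b \ Set.range a)
    (pr : Equiv.Perm (Fin n) → Equiv.Perm (Fin n))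
    (hpr : ∀ τ, pr τ ∈ topkFinset hl a ∧
      ∀ ρ ∈ topkFinset hl a, kendallDist (pr τ) τ ≤ kendallDist ρ τ)
    (hR' : (topkFinset hm b).Nonempty)
    (hR'' : (topkFinset hlq (Fin.append a (b ∘ e))).Nonempty) :
    (PMF.uniformOfFinset (topkFinset hm b) hR').map pr =
      PMF.uniformOfFinset (topkFinset hlq (Fin.append a (b ∘ e))) hR'' := by
  have hproj : IsKendallProjection (topkFinset hl a) pr := hpr
  have hsub := hrange.superset
  refine PMF.map_uniformOfFinset_eq_of_card_fiber_eq hR' hR''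
    (fun τ hτ => (hproj.apply_mem_topkFinset_append he hsub hR'' hτ).1)
    fun ρ₁ h₁ ρ₂ h₂ => le_antisymm (hproj.card_fiber_le he hsub hR'' h₁ h₂)
      (hproj.card_fiber_le he hsub hR'' h₂ h₁)

/-- Let `R = R(a_1,…,a_l)` and `R' = R(b_1,…,b_m)` be top-`l` and top-`m`
partial rankings, let `b ∘ e` enumerate (in increasing order of index into
`b`) the elements of `{b_1,…,b_m} \ {a_1,…,a_l}`, and let
`R'' = R(a_1,…,a_l, b_{i_1},…,b_{i_q})`. If `τ` is uniform on `R'`, then the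
Kendall projection `Π_R(τ)` (here any fixed choice function `pr` selecting the
Kendall-closest element of `R`) is uniform on `R''`; i.e. the pushforward of
the uniform measure on `R'` under `pr` is the uniform measure on `R''`. -/
theorem proj_pushforward_uniform {n l m q : ℕ} (hl : l ≤ n) (hm : m ≤ n)
    (hlq : l + q ≤ n)
    (a : Fin l → Fin n) (ha : Function.Injective a)
    (b : Fin m → Fin n) (hb : Function.Injective b)
    (e : Fin q → Fin m) (he : StrictMono e)
    (hrange : Set.range (b ∘ e) = Set.range b \ Set.range a)
    (pr : Equiv.Perm (Fin n) → Equiv.Perm (Fin n))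
    (hpr : ∀ τ, pr τ ∈ topkFinset hl a ∧
      ∀ ρ ∈ topkFinset hl a, kendallDist (pr τ) τ ≤ kendallDist ρ τ)
    (hR' : (topkFinset hm b).Nonempty)
    (hR'' : (topkFinset hlq (Fin.append a (b ∘ e))).Nonempty) :
    (PMF.uniformOfFinset (topkFinset hm b) hR').map pr =
      PMF.uniformOfFinset (topkFinset hlq (Fin.append a (b ∘ e))) hR'' :=
  proj_pushforward_uniform_general hl hm hlq a b e he hrange pr hpr hR' hR''
end

section
/- Let R ⊆ S_n be a top-k partial ranking, let σ be uniformly distributed on R, let σ_0 ∈ R be fixed, and set X = d(σ, σ_0) and Y = d(A_R(σ), σ_0). Then for every monotone increasing function h : ℝ → ℝ, the random variables h(X) and h(Y) have non-positive covariance: Cov(h(X), h(Y)) ≤ 0. -/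
/-!
On a top-`k` partial ranking `R`, the antithetic map fixes the top `k` items and reverses the
order of the remaining ones. Hence on every pair of items, at least one of which is ranked in
the top `k`, both `σ` and `A_R σ` agree with `σ₀`, while on every pair of two bottom items
exactly one of them does. So `d(σ, σ₀) + d(A_R σ, σ₀)` is the same number for all `σ ∈ R`;
then `h ∘ X` and `h ∘ Y` antivary on `R`, and Chebyshev's sum inequality makes their covariance
non-positive.
-/

open Finset Equiv

lemma antivaryOn_of_add_eq_const {ι α : Type*} [AddCommGroup α] [PartialOrder α]
    [IsOrderedAddMonoid α] {f g : ι → α} {s : Set ι} {c : α}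
    (hfg : ∀ i ∈ s, f i + g i = c) : AntivaryOn f g s := by
  intro i hi j hj hij
  rw [eq_sub_of_add_eq (hfg i hi), eq_sub_of_add_eq (hfg j hj)]
  exact sub_le_sub_left hij.le c

lemma AntivaryOn.average_mul_sub_average_mul_average_nonpos {ι α : Type*} [Field α]
    [LinearOrder α] [IsStrictOrderedRing α] {s : Finset ι} {f g : ι → α} (hfg : AntivaryOn f g s) :
    (∑ i ∈ s, f i * g i) / #s - (∑ i ∈ s, f i) / #s * ((∑ i ∈ s, g i) / #s) ≤ 0 := by
  rcases s.eq_empty_or_nonempty with rfl | hs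
  · simp
  have hcard : (0 : α) < #s := by exact_mod_cast hs.card_pos
  rw [sub_nonpos, div_mul_div_comm, div_le_div_iff₀ hcard (by positivity)]
  nlinarith [hfg.card_mul_sum_le_sum_mul_sum]

section revAfter

variable {n k : ℕ}

lemma revAfter_val (p : Fin n) :
    (revAfter n k p : ℕ) = if (p : ℕ) < k then (p : ℕ) else n + k - 1 - p := by
  show Fin.val (if _h : (p : ℕ) < k then p else ⟨n + k - 1 - p, by omega⟩) = _
  split_ifs <;> rfl

lemma revAfter_of_lt {p : Fin n} (hp : (p : ℕ) < k) : revAfter n k p = p :=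
  Fin.ext (by rw [revAfter_val, if_pos hp])

lemma revAfter_lt_revAfter_iff {p q : Fin n} (hp : k ≤ (p : ℕ)) (hq : k ≤ (q : ℕ)) :
    revAfter n k p < revAfter n k q ↔ q < p := by
  have := p.isLt
  have := q.isLt
  rw [Fin.lt_def, Fin.lt_def, revAfter_val, revAfter_val, if_neg (by omega), if_neg (by omega)]
  omega

lemma revAfter_inv : (revAfter n k)⁻¹ = revAfter n k :=
  Function.Involutive.toPerm_symm _

lemma antithetic_inv_apply (σ : Perm (Fin n)) (x : Fin n) :
    (antithetic n k σ)⁻¹ x = revAfter n k (σ⁻¹ x) := by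
  rw [antithetic, mul_inv_rev, revAfter_inv, Perm.mul_apply]

end revAfter

section topkFinset

variable {n k : ℕ} {hk : k ≤ n} {a : Fin k → Fin n} {σ τ : Perm (Fin n)}

lemma inv_apply_eq_of_mem_topkFinset (hσ : σ ∈ topkFinset hk a) (hτ : τ ∈ topkFinset hk a)
    {x : Fin n} (hx : (τ⁻¹ x : ℕ) < k) : σ⁻¹ x = τ⁻¹ x := by
  have hcast : Fin.castLE hk ⟨τ⁻¹ x, hx⟩ = τ⁻¹ x := rfl
  rw [Perm.inv_eq_iff_eq, ← hcast, (mem_filter.mp hσ).2, ← (mem_filter.mp hτ).2, hcast]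
  simp

lemma antithetic_mem_topkFinset (hσ : σ ∈ topkFinset hk a) :
    antithetic n k σ ∈ topkFinset hk a := by
  refine mem_filter.mpr ⟨mem_univ _, fun i => ?_⟩
  rw [antithetic, Perm.mul_apply, revAfter_of_lt (by simp), (mem_filter.mp hσ).2]

lemma inv_lt_inv_iff_of_mem_topkFinset_s15 (hσ : σ ∈ topkFinset hk a)
    (hτ : τ ∈ topkFinset hk a) {x y : Fin n} (hxy : (τ⁻¹ x : ℕ) < k ∨ (τ⁻¹ y : ℕ) < k) :
    σ⁻¹ x < σ⁻¹ y ↔ τ⁻¹ x < τ⁻¹ y := by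
  have agree : ∀ z, ((τ⁻¹ z : ℕ) < k → (σ⁻¹ z : ℕ) = τ⁻¹ z) ∧
      ((σ⁻¹ z : ℕ) < k → (τ⁻¹ z : ℕ) = σ⁻¹ z) := fun z =>
    ⟨fun h => congrArg Fin.val (inv_apply_eq_of_mem_topkFinset hσ hτ h),
      fun h => congrArg Fin.val (inv_apply_eq_of_mem_topkFinset hτ hσ h)⟩
  have := agree x
  have := agree y
  rw [Fin.lt_def, Fin.lt_def]
  omega

lemma discordant_add_discordant_antithetic (hσ : σ ∈ topkFinset hk a)
    (hτ : τ ∈ topkFinset hk a) {x y : Fin n} (hxy : x ≠ y) :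
    ((if ¬((σ⁻¹ x < σ⁻¹ y) ↔ (τ⁻¹ x < τ⁻¹ y)) then 1 else 0) +
      if ¬(((antithetic n k σ)⁻¹ x < (antithetic n k σ)⁻¹ y) ↔ (τ⁻¹ x < τ⁻¹ y)) then 1 else 0)
      = if k ≤ (τ⁻¹ x : ℕ) ∧ k ≤ (τ⁻¹ y : ℕ) then 1 else 0 := by
  by_cases hbottom : k ≤ (τ⁻¹ x : ℕ) ∧ k ≤ (τ⁻¹ y : ℕ)
  · have bottom_of : ∀ z, k ≤ (τ⁻¹ z : ℕ) → k ≤ (σ⁻¹ z : ℕ) := fun z hz => by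
      by_contra! hlt
      rw [inv_apply_eq_of_mem_topkFinset hτ hσ hlt] at hz
      omega
    have hne : σ⁻¹ x ≠ σ⁻¹ y := fun h => hxy (σ⁻¹.injective h)
    simp only [antithetic_inv_apply,
      revAfter_lt_revAfter_iff (bottom_of x hbottom.1) (bottom_of y hbottom.2), if_pos hbottom]
    have := hne.lt_or_gt
    have := lt_asymm (a := σ⁻¹ x) (b := σ⁻¹ y)
    split_ifs <;> tauto
  · have htop : (τ⁻¹ x : ℕ) < k ∨ (τ⁻¹ y : ℕ) < k := by omega
    simp only [inv_lt_inv_iff_of_mem_topkFinset_s15 hσ hτ htop,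
      inv_lt_inv_iff_of_mem_topkFinset_s15 (antithetic_mem_topkFinset hσ) hτ htop, if_neg hbottom,
      iff_self, not_true_eq_false, if_false]

lemma kendallDist_add_kendallDist_antithetic (hσ : σ ∈ topkFinset hk a)
    (hτ : τ ∈ topkFinset hk a) :
    kendallDist σ τ + kendallDist (antithetic n k σ) τ =
      #{p : Fin n × Fin n | p.1 < p.2 ∧ k ≤ (τ⁻¹ p.1 : ℕ) ∧ k ≤ (τ⁻¹ p.2 : ℕ)} := by
  simp only [kendallDist, card_filter, ← sum_add_distrib]
  refine sum_congr rfl fun p _ => ?_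
  by_cases hp : p.1 < p.2
  · simpa only [hp, true_and] using discordant_add_discordant_antithetic hσ hτ hp.ne
  · simp [hp]

end topkFinset

theorem antithetic_monotone_nonpos_cov_general {n k : ℕ} (hk : k ≤ n)
    (a : Fin k → Fin n)
    (σ₀ : Equiv.Perm (Fin n)) (hσ₀ : σ₀ ∈ topkFinset hk a)
    (h : ℝ → ℝ) (hmono : Monotone h) :
    let R := topkFinset hk a
    let E : (Equiv.Perm (Fin n) → ℝ) → ℝ := fun f => (∑ σ ∈ R, f σ) / R.card
    let X : Equiv.Perm (Fin n) → ℝ := fun σ => (kendallDist σ σ₀ : ℝ)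
    let Y : Equiv.Perm (Fin n) → ℝ :=
      fun σ => (kendallDist (antithetic n k σ) σ₀ : ℝ)
    E (fun σ => h (X σ) * h (Y σ)) - E (fun σ => h (X σ)) * E (fun σ => h (Y σ)) ≤ 0 := by
  intro R E X Y
  have sum_const : ∀ σ ∈ (R : Set (Perm (Fin n))), X σ + Y σ =
      #{p : Fin n × Fin n | p.1 < p.2 ∧ k ≤ (σ₀⁻¹ p.1 : ℕ) ∧ k ≤ (σ₀⁻¹ p.2 : ℕ)} :=
    fun σ hσ => by dsimp only [X, Y]; exact_mod_cast kendallDist_add_kendallDist_antithetic hσ hσ₀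
  have anti : AntivaryOn (h ∘ X) (h ∘ Y) R :=
    ((antivaryOn_of_add_eq_const sum_const).comp_monotone_on_left hmono).comp_monotoneOn_right
      (hmono.monotoneOn _)
  exact anti.average_mul_sub_average_mul_average_nonpos

/-- Let `R` be a top-`k` partial ranking, let `σ` be uniform on `R`, let
`σ₀ ∈ R`, and set `X = d(σ, σ₀)`, `Y = d(A_R(σ), σ₀)`. For every monotone
increasing `h : ℝ → ℝ`, the random variables `h(X)` and `h(Y)` have
non-positive covariance, expectations being taken with respect to the uniform
distribution on `R`. -/
theorem antithetic_monotone_nonpos_cov {n k : ℕ} (hk : k ≤ n)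
    (a : Fin k → Fin n) (ha : Function.Injective a)
    (σ₀ : Equiv.Perm (Fin n)) (hσ₀ : σ₀ ∈ topkFinset hk a)
    (h : ℝ → ℝ) (hmono : Monotone h) :
    let R := topkFinset hk a
    let E : (Equiv.Perm (Fin n) → ℝ) → ℝ := fun f => (∑ σ ∈ R, f σ) / R.card
    let X : Equiv.Perm (Fin n) → ℝ := fun σ => (kendallDist σ σ₀ : ℝ)
    let Y : Equiv.Perm (Fin n) → ℝ :=
      fun σ => (kendallDist (antithetic n k σ) σ₀ : ℝ)
    E (fun σ => h (X σ) * h (Y σ)) - E (fun σ => h (X σ)) * E (fun σ => h (Y σ)) ≤ 0 :=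
  antithetic_monotone_nonpos_cov_general hk a σ₀ hσ₀ h hmono
end
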